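/- arXiv:2211.16104 — 2 statements merged into one kernel-verified Lean document; each statement's English description precedes it below -/
import Mathlib

section
/- The class of two-sorted functions definable in the Bellantoni–Cook algebra B satisfies the polymax bounding lemma: for every f(x⃗; y⃗) ∈ B there is a monotone polynomial p_f such that |f(x⃗; y⃗)| ≤ p_f(|x⃗|) + max|y⃗| for all inputs. -/
open MvPolynomial

lemma my_eval_mono {σ : Type*} (p : MvPolynomial σ ℕ) {s t : σ → ℕ} (h : ∀ i, s i ≤ t i) :
    eval s p ≤ eval t p := by
  induction p using MvPolynomial.induction_on with
  | C a => simp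
  | add p q hp hq => simpa using add_le_add hp hq
  | mul_X p i hp => simpa using Nat.mul_le_mul hp (h i)

lemma my_eval_bind₁ {σ τ : Type*} (s : τ → ℕ) (g : σ → MvPolynomial τ ℕ)
    (p : MvPolynomial σ ℕ) :
    eval s (bind₁ g p) = eval (fun i => eval s (g i)) p := by
  simpa using MvPolynomial.eval₂Hom_bind₁ (RingHom.id ℕ) s g p

lemma size_two_mul (y : ℕ) : Nat.size (2 * y) ≤ Nat.size y + 1 := by
  rw [Nat.size_le, pow_succ, mul_comm (2 ^ Nat.size y) 2]
  have := Nat.lt_size_self y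
  omega

lemma size_two_mul_add_one (y : ℕ) : Nat.size (2 * y + 1) ≤ Nat.size y + 1 := by
  rw [Nat.size_le, pow_succ, mul_comm (2 ^ Nat.size y) 2]
  have := Nat.lt_size_self y
  omega

lemma size_div_two_succ {z : ℕ} (hz : z ≠ 0) : Nat.size (z / 2) + 1 ≤ Nat.size z := by
  have h1 : 1 ≤ Nat.size z := Nat.size_pos.2 (Nat.pos_of_ne_zero hz)
  have : z / 2 < 2 ^ (Nat.size z - 1) := by
    rw [Nat.div_lt_iff_lt_mul (by norm_num)]
    calc z < 2 ^ Nat.size z := Nat.lt_size_self z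
    _ = 2 ^ (Nat.size z - 1) * 2 := by
        rw [← pow_succ]; congr 1; omega
  have := Nat.size_le.2 this
  omega


/-- Two-sorted functions with `m` normal and `n` safe arguments. -/
def TS (m n : ℕ) : Type := (Fin m → ℕ) → (Fin n → ℕ) → ℕ

/-- A two-sorted function together with its arities. -/
structure TSF : Type where
  m : ℕ
  n : ℕ
  f : TS m n

/-- The Bellantoni–Cook algebra `B(F)` relativised to a set `F` of initial
two-sorted functions: initial functions (zero, binary successors, projections,
predecessor, conditional, members of `F`), closed under safe composition and
safe recursion on notation. -/
inductive BCrel (F : Set TSF) : ∀ m n : ℕ, TS m n → Prop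
  | zero {m n : ℕ} : BCrel F m n (fun _ _ => 0)
  | succ0 {m n : ℕ} (j : Fin n) : BCrel F m n (fun _ y => 2 * y j)
  | succ1 {m n : ℕ} (j : Fin n) : BCrel F m n (fun _ y => 2 * y j + 1)
  | projN {m n : ℕ} (j : Fin m) : BCrel F m n (fun x _ => x j)
  | projS {m n : ℕ} (j : Fin n) : BCrel F m n (fun _ y => y j)
  | pred {m n : ℕ} (j : Fin n) : BCrel F m n (fun _ y => y j / 2)
  | cond {m n : ℕ} (w a b c : Fin n) :
      BCrel F m n (fun _ y => if y w = 0 then y a else if y w % 2 = 0 then y b else y c)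
  | init (o : TSF) (ho : o ∈ F) : BCrel F o.m o.n o.f
  | comp {m n m' n' : ℕ} (h : TS m' n') (gN : Fin m' → TS m 0) (gS : Fin n' → TS m n) :
      BCrel F m' n' h → (∀ i, BCrel F m 0 (gN i)) → (∀ i, BCrel F m n (gS i)) →
      BCrel F m n (fun x y => h (fun i => gN i x Fin.elim0) (fun i => gS i x y))
  | srec {m n : ℕ} (g : TS m n) (h0 h1 : TS (m+1) (n+1)) (f : TS (m+1) n) :
      BCrel F m n g → BCrel F (m+1) (n+1) h0 → BCrel F (m+1) (n+1) h1 →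
      (∀ x y, f (Fin.cons 0 x) y = g x y) →
      (∀ z x y, z ≠ 0 →
        f (Fin.cons (2 * z) x) y = h0 (Fin.cons z x) (Fin.snoc y (f (Fin.cons z x) y))) →
      (∀ z x y,
        f (Fin.cons (2 * z + 1) x) y = h1 (Fin.cons z x) (Fin.snoc y (f (Fin.cons z x) y))) →
      BCrel F (m+1) n f

/-- Polymax bounding lemma for the Bellantoni–Cook algebra `B`: for every
`f(x⃗;y⃗) ∈ B` there is a monotone polynomial `p_f` with
`|f(x⃗;y⃗)| ≤ p_f(|x⃗|) + max|y⃗|`. -/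
theorem bc_polymax_bounding (m n : ℕ) (f : TS m n) (hf : BCrel ∅ m n f) :
    ∃ p : MvPolynomial (Fin m) ℕ,
      (∀ s t : Fin m → ℕ, (∀ i, s i ≤ t i) →
        MvPolynomial.eval s p ≤ MvPolynomial.eval t p) ∧
      ∀ (x : Fin m → ℕ) (y : Fin n → ℕ),
        Nat.size (f x y) ≤
          MvPolynomial.eval (fun i => Nat.size (x i)) p +
            Finset.univ.sup (fun i => Nat.size (y i)) := by
  induction hf with
  | zero => exact ⟨0, fun s t _ => le_rfl, fun x y => by simp⟩
  | succ0 j =>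
    refine ⟨1, fun s t _ => by simp, fun x y => ?_⟩
    have h1 := size_two_mul (y j)
    have h2 : Nat.size (y j) ≤ Finset.univ.sup (fun i => Nat.size (y i)) := by
      simpa using Finset.le_sup (f := fun i => Nat.size (y i)) (Finset.mem_univ j)
    simp only [map_one]
    omega
  | succ1 j =>
    refine ⟨1, fun s t _ => by simp, fun x y => ?_⟩
    have h1 := size_two_mul_add_one (y j)
    have h2 : Nat.size (y j) ≤ Finset.univ.sup (fun i => Nat.size (y i)) := by
      simpa using Finset.le_sup (f := fun i => Nat.size (y i)) (Finset.mem_univ j)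
    simp only [map_one]
    omega
  | projN j =>
    refine ⟨X j, fun s t h => by simpa using h j, fun x y => by simp⟩
  | projS j =>
    refine ⟨0, fun s t _ => le_rfl, fun x y => ?_⟩
    have h2 := Finset.le_sup (f := fun i => Nat.size (y i)) (Finset.mem_univ j)
    simpa using h2
  | pred j =>
    refine ⟨0, fun s t _ => le_rfl, fun x y => ?_⟩
    have h1 : Nat.size (y j / 2) ≤ Nat.size (y j) := Nat.size_le_size (Nat.div_le_self _ _)
    have h2 := Finset.le_sup (f := fun i => Nat.size (y i)) (Finset.mem_univ j)
    simpa using h1.trans h2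
  | cond w a b c =>
    refine ⟨0, fun s t _ => le_rfl, fun x y => ?_⟩
    have ha := Finset.le_sup (f := fun i => Nat.size (y i)) (Finset.mem_univ a)
    have hb := Finset.le_sup (f := fun i => Nat.size (y i)) (Finset.mem_univ b)
    have hc := Finset.le_sup (f := fun i => Nat.size (y i)) (Finset.mem_univ c)
    simp only [map_zero, zero_add]
    split_ifs <;> assumption
  | init o ho => exact absurd ho (Set.notMem_empty o)
  | comp h gN gS hh hgN hgS ihh ihgN ihgS =>
    obtain ⟨ph, _, phbd⟩ := ihh
    choose pN _ pNbd using ihgN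
    choose pS _ pSbd using ihgS
    refine ⟨bind₁ pN ph + ∑ i, pS i, fun s t hst => my_eval_mono _ hst, fun x y => ?_⟩
    set M := Finset.univ.sup (fun i => Nat.size (y i)) with hM
    have h1 : ∀ i, Nat.size (gN i x Fin.elim0) ≤ eval (fun j => Nat.size (x j)) (pN i) := by
      intro i
      simpa using pNbd i x Fin.elim0
    have h2 := phbd (fun i => gN i x Fin.elim0) (fun i => gS i x y)
    have h3 : eval (fun i => Nat.size (gN i x Fin.elim0)) ph
        ≤ eval (fun j => Nat.size (x j)) (bind₁ pN ph) := by
      rw [my_eval_bind₁]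
      exact my_eval_mono _ h1
    have h4 : Finset.univ.sup (fun i => Nat.size (gS i x y))
        ≤ eval (fun j => Nat.size (x j)) (∑ i, pS i) + M := by
      refine Finset.sup_le fun i _ => (pSbd i x y).trans (add_le_add_left ?_ M)
      rw [map_sum]
      exact Finset.single_le_sum (f := fun i => eval (fun j => Nat.size (x j)) (pS i))
        (fun i _ => Nat.zero_le _) (Finset.mem_univ i)
    rw [map_add]
    beta_reduce
    omega
  | srec g h0 h1 f' hg hh0 hh1 e0 eh0 eh1 ihg ih0 ih1 =>
    rename_i m' n'
    obtain ⟨pg, _, pgbd⟩ := ihg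
    obtain ⟨p0, _, p0bd⟩ := ih0
    obtain ⟨p1, _, p1bd⟩ := ih1
    refine ⟨rename Fin.succ pg + X 0 * (p0 + p1), fun s t hst => my_eval_mono _ hst,
      fun x y => ?_⟩
    have key : ∀ (z : ℕ) (x : Fin m' → ℕ) (y : Fin n' → ℕ),
        Nat.size (f' (Fin.cons z x) y) ≤
          eval (fun i => Nat.size (x i)) pg +
          Nat.size z * eval (Fin.cons (Nat.size z) (fun i => Nat.size (x i))) (p0 + p1) +
          Finset.univ.sup (fun i => Nat.size (y i)) := by
      intro z
      induction z using Nat.strong_induction_on with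
      | _ z ih =>
        intro x y
        rcases Nat.eq_zero_or_pos z with hz | hz
        · subst hz
          rw [e0]
          have := pgbd x y
          simpa using this.trans (by omega)
        · set z' := z / 2 with hz'def
          have hzne : z ≠ 0 := hz.ne'
          have hlt : z' < z := Nat.div_lt_self hz (by norm_num)
          have hsz : Nat.size z' + 1 ≤ Nat.size z := size_div_two_succ hzne
          have IH := ih z' hlt x y
          set sx := fun i => Nat.size (x i) with hsx
          set M := Finset.univ.sup (fun i => Nat.size (y i)) with hM
          set v := f' (Fin.cons z' x) y with hv
          have hcons : (fun i : Fin (m'+1) => Nat.size (Fin.cons (α := fun _ => ℕ) z' x i)) = Fin.cons (Nat.size z') sx := by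
            funext i
            rcases Fin.eq_zero_or_eq_succ i with rfl | ⟨j, rfl⟩ <;> simp [hsx]
          have hsup : Finset.univ.sup (fun i => Nat.size (Fin.snoc (α := fun _ => ℕ) y v i))
              ≤ max M (Nat.size v) := by
            refine Finset.sup_le fun i _ => ?_
            induction i using Fin.lastCases with
            | last => simp
            | cast j =>
              have := Finset.le_sup (f := fun i => Nat.size (y i)) (Finset.mem_univ j)
              simp only [Fin.snoc_castSucc]
              exact le_max_of_le_left this
          have hmono : eval (Fin.cons (Nat.size z') sx) (p0 + p1)
              ≤ eval (Fin.cons (Nat.size z) sx) (p0 + p1) := by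
            refine my_eval_mono _ fun i => ?_
            rcases Fin.eq_zero_or_eq_succ i with rfl | ⟨j, rfl⟩ <;> simp
            omega
          set Ez := eval (Fin.cons (Nat.size z) sx) (p0 + p1) with hEz
          set Ez' := eval (Fin.cons (Nat.size z') sx) (p0 + p1) with hEz'
          have hmax : max M (Nat.size v) ≤ eval sx pg + Nat.size z' * Ez' + M :=
            max_le (by omega) IH
          have hmul : Nat.size z' * Ez' ≤ Nat.size z' * Ez :=
            Nat.mul_le_mul_left _ hmono
          have hmul2 : Ez + Nat.size z' * Ez ≤ Nat.size z * Ez := by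
            have : (Nat.size z' + 1) * Ez ≤ Nat.size z * Ez :=
              Nat.mul_le_mul_right _ hsz
            calc Ez + Nat.size z' * Ez = (Nat.size z' + 1) * Ez := by ring
              _ ≤ Nat.size z * Ez := this
          have hb : Nat.size (f' (Fin.cons z x) y) ≤ Ez + max M (Nat.size v) := by
            have hcase : z = 2 * z' ∨ z = 2 * z' + 1 := by omega
            have hz'ne : z = 2 * z' → z' ≠ 0 := by omega
            rcases hcase with hc | hc
            · rw [hc, eh0 z' x y (hz'ne hc)]
              have := p0bd (Fin.cons z' x) (Fin.snoc y v)
              rw [hcons] at this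
              refine this.trans (add_le_add ?_ hsup)
              calc eval (Fin.cons (Nat.size z') sx) p0
                  ≤ Ez' := by rw [hEz', map_add]; omega
                _ ≤ Ez := hmono
            · rw [hc, eh1 z' x y]
              have := p1bd (Fin.cons z' x) (Fin.snoc y v)
              rw [hcons] at this
              refine this.trans (add_le_add ?_ hsup)
              calc eval (Fin.cons (Nat.size z') sx) p1
                  ≤ Ez' := by rw [hEz', map_add]; omega
                _ ≤ Ez := hmono
          calc Nat.size (f' (Fin.cons z x) y)
              ≤ Ez + max M (Nat.size v) := hb
            _ ≤ Ez + (eval sx pg + Nat.size z' * Ez' + M) := by omega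
            _ ≤ Ez + (eval sx pg + Nat.size z' * Ez + M) := by omega
            _ = eval sx pg + (Ez + Nat.size z' * Ez) + M := by ring
            _ ≤ eval sx pg + Nat.size z * Ez + M := by omega
    have hx : x = Fin.cons (x 0) (Fin.tail x) := (Fin.cons_self_tail x).symm
    have hk := key (x 0) (Fin.tail x) y
    rw [← hx] at hk
    have hcons2 : (fun i => Nat.size (x i)) =
        Fin.cons (Nat.size (x 0)) (fun i => Nat.size (Fin.tail x i)) := by
      funext i
      rcases Fin.eq_zero_or_eq_succ i with rfl | ⟨j, rfl⟩ <;> simp [Fin.tail]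
    rw [hcons2, map_add, map_mul, eval_X, eval_rename, Fin.cons_zero]
    have hcomp : (Fin.cons (Nat.size (x 0)) (fun i => Nat.size (Fin.tail x i)) : Fin _ → ℕ)
        ∘ Fin.succ = fun i => Nat.size (Fin.tail x i) := by
      funext i; simp
    rw [hcomp]
    exact hk
end

section
/- A simultaneous safe recursion scheme on the permutation-of-prefixes order reduces to the single recursion scheme: if functions f₁,…,f_k are defined simultaneously by fᵢ(x⃗;y⃗) = hᵢ((λu⃗ ⊂ x⃗, λv⃗ ⊆ y⃗. f_j(u⃗;v⃗))_{1≤j≤k})(x⃗;y⃗) from functions hᵢ in B^⊂(a⃗,b⃗), then each fᵢ belongs to B^⊂(b⃗), i.e. is definable using only the (non-simultaneous) safe recursion on ⊂. -/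
/-- `x` is a binary prefix of `y`: `x = ⌊y / 2^k⌋` for some `k`. -/
def BinPrefix (x y : ℕ) : Prop := ∃ k : ℕ, x = y / 2 ^ k

/-- strict binary prefix -/
def BinStrictPrefix (x y : ℕ) : Prop := BinPrefix x y ∧ x ≠ y

/-- `x⃗ ⊆ y⃗`: permutation of prefixes. -/
def TupleSub {n : ℕ} (x y : Fin n → ℕ) : Prop :=
  ∃ π : Equiv.Perm (Fin n), ∀ i, BinPrefix (x i) (y (π i))

/-- `x⃗ ⊂ y⃗`: permutation of prefixes, at least one strict. -/
def TupleSSub {n : ℕ} (x y : Fin n → ℕ) : Prop :=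
  ∃ π : Equiv.Perm (Fin n),
    (∀ i, BinPrefix (x i) (y (π i))) ∧ ∃ i, BinStrictPrefix (x i) (y (π i))


/-- The guarded abstraction `λ u⃗ ⊂ x⃗, λ v⃗ ⊆ y⃗. f(u⃗;v⃗)`:
equals `f(u⃗;v⃗)` if `u⃗ ⊂ x⃗` and `v⃗ ⊆ y⃗`, and `0` otherwise. -/
noncomputable def pguard {m n : ℕ} (x : Fin m → ℕ) (y : Fin n → ℕ) (f : TS m n) : TS m n :=
  fun u v =>
    haveI := Classical.propDecidable (TupleSSub u x ∧ TupleSub v y)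
    if TupleSSub u x ∧ TupleSub v y then f u v else 0

/-- The algebra `B^⊂(F, A)`: two-sorted functions over initial functions `F` and
oracles `A`, containing the Bellantoni–Cook initial functions, closed under
relativised safe composition (the inner functions substituted into normal
positions use no oracles from `A`) and safe recursion on the
permutation-of-prefixes order `⊂`. -/
inductive Bsub (F : Set TSF) : List TSF → ∀ m n : ℕ, TS m n → Prop
  | zero {A : List TSF} {m n : ℕ} : Bsub F A m n (fun _ _ => 0)
  | succ0 {A : List TSF} {m n : ℕ} (j : Fin n) : Bsub F A m n (fun _ y => 2 * y j)
  | succ1 {A : List TSF} {m n : ℕ} (j : Fin n) : Bsub F A m n (fun _ y => 2 * y j + 1)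
  | projN {A : List TSF} {m n : ℕ} (j : Fin m) : Bsub F A m n (fun x _ => x j)
  | projS {A : List TSF} {m n : ℕ} (j : Fin n) : Bsub F A m n (fun _ y => y j)
  | pred {A : List TSF} {m n : ℕ} (j : Fin n) : Bsub F A m n (fun _ y => y j / 2)
  | cond {A : List TSF} {m n : ℕ} (w a b c : Fin n) :
      Bsub F A m n (fun _ y => if y w = 0 then y a else if y w % 2 = 0 then y b else y c)
  | init {A : List TSF} (o : TSF) (ho : o ∈ F) : Bsub F A o.m o.n o.f
  | oracle {A : List TSF} (o : TSF) (ho : o ∈ A) : Bsub F A o.m o.n o.f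
  | comp {A : List TSF} {m n m' n' : ℕ} (h : TS m' n')
      (gN : Fin m' → TS m 0) (gS : Fin n' → TS m n) :
      Bsub F A m' n' h → (∀ i, Bsub F [] m 0 (gN i)) → (∀ i, Bsub F A m n (gS i)) →
      Bsub F A m n (fun x y => h (fun i => gN i x Fin.elim0) (fun i => gS i x y))
  | srec {A : List TSF} {m n : ℕ} (H : TS m n → TS m n) (f : TS m n) :
      (∀ a : TS m n, Bsub F (⟨m, n, a⟩ :: A) m n (H a)) →
      (∀ x y, f x y = H (pguard x y f) x y) →
      Bsub F A m n f

/-! ### Auxiliary lemmas -/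

section OrderLemmas

lemma binPrefix_refl (x : ℕ) : BinPrefix x x := ⟨0, by simp⟩

lemma binPrefix_trans {x y z : ℕ} (h1 : BinPrefix x y) (h2 : BinPrefix y z) : BinPrefix x z := by
  obtain ⟨s, rfl⟩ := h1; obtain ⟨t, rfl⟩ := h2
  exact ⟨t + s, by rw [Nat.div_div_eq_div_mul, pow_add]⟩

/-- multiset of values of a tuple -/
def msOf {n : ℕ} (x : Fin n → ℕ) : Multiset ℕ := ↑(List.ofFn x)

lemma msOf_eq_map {n : ℕ} (x : Fin n → ℕ) : msOf x = Multiset.map x Finset.univ.val := by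
  simp [msOf]

lemma msOf_comp_perm {n : ℕ} (g : Fin n → ℕ) (π : Equiv.Perm (Fin n)) :
    msOf (g ∘ π) = msOf g := by
  rw [msOf_eq_map, msOf_eq_map]
  have h : (Finset.univ.val.map (⇑π)) = Finset.univ.val := by
    have h2 := Finset.map_univ_equiv π
    calc Finset.univ.val.map (⇑π) = (Finset.map π.toEmbedding Finset.univ).val := rfl
      _ = Finset.univ.val := by rw [h2]
  calc Multiset.map (g ∘ ⇑π) Finset.univ.val = Multiset.map g (Finset.univ.val.map (⇑π)) := by
        rw [Multiset.map_map]
    _ = _ := by rw [h]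

lemma msOf_succAbove {n : ℕ} (y : Fin (n+1) → ℕ) (j : Fin (n+1)) :
    msOf y = y j ::ₘ msOf (y ∘ j.succAbove) := by
  rw [msOf_eq_map, msOf_eq_map, Fin.univ_succAbove n j]
  rw [Finset.cons_val, Multiset.map_cons, Finset.map_val, Multiset.map_map]
  rfl

lemma msOf_append {m n : ℕ} (x : Fin m → ℕ) (y : Fin n → ℕ) :
    msOf (Fin.append x y) = msOf x + msOf y := by
  simp [msOf, ← Multiset.coe_add, List.ofFn_fin_append]

lemma rel_of_pointwise {r : ℕ → ℕ → Prop} : ∀ {n : ℕ} {x y : Fin n → ℕ},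
    (∀ i, r (x i) (y i)) → Multiset.Rel r (msOf x) (msOf y) := by
  intro n
  induction n with
  | zero => intro x y _; simp [msOf]
  | succ n ih =>
    intro x y h
    have hx : msOf x = x 0 ::ₘ msOf (x ∘ Fin.succ) := by simp [msOf, List.ofFn_succ]; rfl
    have hy : msOf y = y 0 ::ₘ msOf (y ∘ Fin.succ) := by simp [msOf, List.ofFn_succ]; rfl
    rw [hx, hy]
    exact Multiset.Rel.cons (h 0) (ih fun i => h i.succ)

lemma tupleSub_of_rel : ∀ {n : ℕ} {x y : Fin n → ℕ},
    Multiset.Rel BinPrefix (msOf x) (msOf y) → TupleSub x y := by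
  intro n
  induction n with
  | zero => intro x y _; exact ⟨Equiv.refl _, fun i => i.elim0⟩
  | succ n ih =>
    intro x y h
    have hx : msOf x = x 0 ::ₘ msOf (x ∘ Fin.succ) := by simp [msOf, List.ofFn_succ]; rfl
    rw [hx, Multiset.rel_cons_left] at h
    obtain ⟨b, bs', h1, h2, heq⟩ := h
    have hb : b ∈ msOf y := by rw [heq]; exact Multiset.mem_cons_self _ _
    have : ∃ j, y j = b := by
      rw [msOf_eq_map] at hb
      obtain ⟨j, _, hj⟩ := Multiset.mem_map.mp hb
      exact ⟨j, hj⟩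
    obtain ⟨j, rfl⟩ := this
    have hbs : bs' = msOf (y ∘ j.succAbove) := by
      have h5 : (msOf y).erase (y j) = bs' := by rw [heq, Multiset.erase_cons_head]
      rw [← h5, msOf_succAbove y j, Multiset.erase_cons_head]
    rw [hbs] at h2
    obtain ⟨π', hπ'⟩ := ih h2
    set g : Fin (n+1) → Fin (n+1) := Fin.cons j (fun i => j.succAbove (π' i)) with hg
    have hinj : Function.Injective g := by
      intro a b hab
      induction a using Fin.cases with
      | zero =>
        induction b using Fin.cases with
        | zero => rfl
        | succ b => exact absurd hab.symm (by simp [hg, Fin.succAbove_ne])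
      | succ a =>
        induction b using Fin.cases with
        | zero => exact absurd hab (by simp [hg, Fin.succAbove_ne])
        | succ b =>
          simp only [hg, Fin.cons_succ] at hab
          have := π'.injective (Fin.succAbove_right_injective hab)
          simp [this]
    refine ⟨Equiv.ofBijective g (Finite.injective_iff_bijective.mp hinj), ?_⟩
    intro i
    induction i using Fin.cases with
    | zero => simpa [Equiv.ofBijective, hg] using h1
    | succ i => simpa [Equiv.ofBijective, hg] using hπ' i

lemma rel_of_tupleSub {n : ℕ} {x y : Fin n → ℕ} (h : TupleSub x y) :
    Multiset.Rel BinPrefix (msOf x) (msOf y) := by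
  obtain ⟨π, hπ⟩ := h
  have h2 := rel_of_pointwise (r := BinPrefix) (x := x) (y := y ∘ π) hπ
  rwa [msOf_comp_perm] at h2

lemma rel_cancel_cons {r : ℕ → ℕ → Prop} (hr : Transitive r) {a : ℕ} {s t : Multiset ℕ}
    (h : Multiset.Rel r (a ::ₘ s) (a ::ₘ t)) : Multiset.Rel r s t := by
  rw [Multiset.rel_cons_left] at h
  obtain ⟨b, bs', h1, h2, heq⟩ := h
  rcases Multiset.cons_eq_cons.mp heq with ⟨_, rfl⟩ | ⟨hne, cs, rfl, rfl⟩
  · exact h2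
  · rw [Multiset.rel_cons_right] at h2
    obtain ⟨a', s', h3, h4, rfl⟩ := h2
    exact Multiset.Rel.cons (hr h3 h1) h4

lemma rel_cancel {r : ℕ → ℕ → Prop} (hr : Transitive r) (u : Multiset ℕ) :
    ∀ {s t : Multiset ℕ}, Multiset.Rel r (s + u) (t + u) → Multiset.Rel r s t := by
  induction u using Multiset.induction_on with
  | empty => intro s t h; simpa using h
  | cons a u ih =>
    intro s t h
    rw [Multiset.add_cons, Multiset.add_cons] at h
    exact ih (rel_cancel_cons hr h)

lemma tupleSub_append {n k : ℕ} {v y : Fin n → ℕ} {c c' : Fin k → ℕ}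
    (h1 : TupleSub v y) (h2 : TupleSub c c') :
    TupleSub (Fin.append v c) (Fin.append y c') := by
  obtain ⟨π1, h1⟩ := h1; obtain ⟨π2, h2⟩ := h2
  refine ⟨finSumFinEquiv.symm.trans ((π1.sumCongr π2).trans finSumFinEquiv), ?_⟩
  intro w
  refine Fin.addCases (fun ℓ => ?_) (fun t => ?_) w
  · simpa [Fin.append_left, Fin.append_right] using h1 ℓ
  · simpa [Fin.append_left, Fin.append_right] using h2 t

lemma tupleSub_cancel {n k : ℕ} {v y : Fin n → ℕ} {c c' : Fin k → ℕ}
    (hms : msOf c = msOf c')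
    (h : TupleSub (Fin.append v c) (Fin.append y c')) : TupleSub v y := by
  have h1 := rel_of_tupleSub h
  rw [msOf_append, msOf_append, ← hms] at h1
  have htr : Transitive BinPrefix := fun _ _ _ hab hbc => binPrefix_trans hab hbc
  exact tupleSub_of_rel (rel_cancel (r := BinPrefix) htr _ h1)

end OrderLemmas

section BsubLemmas

lemma Bsub.congr {F : Set TSF} {A : List TSF} {m n : ℕ} {g g' : TS m n}
    (h : Bsub F A m n g) (e : ∀ x y, g' x y = g x y) : Bsub F A m n g' := by
  have : g' = g := funext fun x => funext fun y => e x y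
  rw [this]; exact h

lemma Bsub.weaken {F : Set TSF} {A : List TSF} {m n : ℕ} {g : TS m n}
    (h : Bsub F A m n g) : ∀ A' : List TSF, (∀ o ∈ A, o ∈ A') → Bsub F A' m n g := by
  induction h with
  | zero => exact fun A' _ => .zero
  | succ0 j => exact fun A' _ => .succ0 j
  | succ1 j => exact fun A' _ => .succ1 j
  | projN j => exact fun A' _ => .projN j
  | projS j => exact fun A' _ => .projS j
  | pred j => exact fun A' _ => .pred j
  | cond w a b c => exact fun A' _ => .cond w a b c
  | init o ho => exact fun A' _ => .init o ho
  | oracle o ho => exact fun A' hs => .oracle o (hs o ho)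
  | comp h gN gS hh hgN hgS ihh ihN ihS =>
    exact fun A' hs => .comp h gN gS (ihh A' hs) (fun i => ihN i [] (fun o ho => ho))
      (fun i => ihS i A' hs)
  | srec H f hH hfix ih =>
    refine fun A' hs => .srec H f (fun a => ih a _ ?_) hfix
    intro o ho
    rcases List.mem_cons.mp ho with rfl | ho
    · exact List.mem_cons_self
    · exact List.mem_cons_of_mem _ (hs o ho)

lemma Bsub.subst {F : Set TSF} {A : List TSF} {m n : ℕ} {g : TS m n}
    (h : Bsub F A m n g) : ∀ A' : List TSF, (∀ o ∈ A, Bsub F A' o.m o.n o.f) →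
    Bsub F A' m n g := by
  induction h with
  | zero => exact fun A' _ => .zero
  | succ0 j => exact fun A' _ => .succ0 j
  | succ1 j => exact fun A' _ => .succ1 j
  | projN j => exact fun A' _ => .projN j
  | projS j => exact fun A' _ => .projS j
  | pred j => exact fun A' _ => .pred j
  | cond w a b c => exact fun A' _ => .cond w a b c
  | init o ho => exact fun A' _ => .init o ho
  | oracle o ho => exact fun A' hs => hs o ho
  | comp h gN gS hh hgN hgS ihh ihN ihS =>
    exact fun A' hs => .comp h gN gS (ihh A' hs) (fun i => ihN i [] (by simp))
      (fun i => ihS i A' hs)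
  | srec H f hH hfix ih =>
    refine fun A' hs => .srec H f (fun a => ih a _ ?_) hfix
    intro o ho
    rcases List.mem_cons.mp ho with rfl | ho
    · exact .oracle _ (List.mem_cons_self)
    · exact (hs o ho).weaken _ (fun o' ho' => List.mem_cons_of_mem _ ho')

lemma bsub_const {F : Set TSF} (A : List TSF) (m n : ℕ) : ∀ c : ℕ,
    Bsub F A m n (fun _ _ => c) := by
  intro c
  induction c using Nat.strong_induction_on with
  | _ c ih =>
    rcases Nat.eq_zero_or_pos c with rfl | hc
    · exact .zero
    · have hrec := ih (c / 2) (Nat.div_lt_self hc one_lt_two)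
      rcases Nat.mod_two_eq_zero_or_one c with hpar | hpar
      · exact Bsub.congr
          (Bsub.comp (fun _ y => 2 * y 0) (fun i => i.elim0) (fun _ => fun _ _ => c / 2)
            (.succ0 (0 : Fin 1)) (fun i => i.elim0) (fun _ => hrec))
          (fun x y => by show c = 2 * (c / 2); omega)
      · exact Bsub.congr
          (Bsub.comp (fun _ y => 2 * y 0 + 1) (fun i => i.elim0) (fun _ => fun _ _ => c / 2)
            (.succ1 (0 : Fin 1)) (fun i => i.elim0) (fun _ => hrec))
          (fun x y => by show c = 2 * (c / 2) + 1; omega)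

lemma bsub_sel {F : Set TSF} (A : List TSF) : ∀ c : ℕ,
    Bsub F A 0 3 (fun _ y => if y 0 = c then y 1 else y 2) := by
  intro c
  induction c using Nat.strong_induction_on with
  | _ c ih =>
    rcases Nat.eq_zero_or_pos c with rfl | hc
    · refine Bsub.congr (.cond (0 : Fin 3) 1 2 2) (fun x y => ?_)
      by_cases h : y 0 = 0 <;> simp [h]
    · have hrec := ih (c / 2) (Nat.div_lt_self hc one_lt_two)
      have hE : Bsub F A 0 3 (fun _ y => if y 0 / 2 = c / 2 then y 1 else y 2) := by
        refine Bsub.congr (Bsub.comp _ (fun i => i.elim0)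
          (![fun _ y => y 0 / 2, fun _ y => y 1, fun _ y => y 2]) hrec (fun i => i.elim0)
          (fun i => ?_)) (fun x y => rfl)
        fin_cases i
        · exact .pred 0
        · exact .projS 1
        · exact .projS 2
      rcases Nat.mod_two_eq_zero_or_one c with hpar | hpar
      · refine Bsub.congr (Bsub.comp _ (fun i => i.elim0)
          (![fun _ y => y 0, fun _ y => if y 0 / 2 = c / 2 then y 1 else y 2,
             fun _ y => y 2, fun _ y => y 2])
          (.cond (0 : Fin 4) 1 1 2) (fun i => i.elim0) (fun i => ?_)) (fun x y => ?_)
        · fin_cases i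
          · exact .projS 0
          · exact hE
          · exact .projS 2
          · exact .projS 2
        · show (if y 0 = c then y 1 else y 2) = _
          show _ = if y 0 = 0 then (if y 0 / 2 = c / 2 then y 1 else y 2)
            else if y 0 % 2 = 0 then (if y 0 / 2 = c / 2 then y 1 else y 2) else y 2
          split_ifs <;> omega
      · refine Bsub.congr (Bsub.comp _ (fun i => i.elim0)
          (![fun _ y => y 0, fun _ y => y 2, fun _ y => if y 0 / 2 = c / 2 then y 1 else y 2,
             fun _ y => y 2])
          (.cond (0 : Fin 4) 1 1 2) (fun i => i.elim0) (fun i => ?_)) (fun x y => ?_)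
        · fin_cases i
          · exact .projS 0
          · exact .projS 2
          · exact hE
          · exact .projS 2
        · show (if y 0 = c then y 1 else y 2) = _
          show _ = if y 0 = 0 then y 2
            else if y 0 % 2 = 0 then y 2 else (if y 0 / 2 = c / 2 then y 1 else y 2)
          split_ifs <;> omega

lemma bsub_ifeq {F : Set TSF} {A : List TSF} {m n : ℕ} (c : ℕ) (p : Fin n) {g g' : TS m n}
    (hg : Bsub F A m n g) (hg' : Bsub F A m n g') :
    Bsub F A m n (fun x y => if y p = c then g x y else g' x y) := by
  refine Bsub.congr (Bsub.comp _ (fun i => i.elim0) (![fun _ y => y p, g, g'])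
    (bsub_sel A c) (fun i => i.elim0) (fun i => ?_)) (fun x y => rfl)
  fin_cases i
  · exact .projS p
  · exact hg
  · exact hg'

/-- nested equality tests: if all tests pass, `g`, else `g'`. -/
def checkList {m n : ℕ} (g g' : TS m n) : List (Fin n × ℕ) → TS m n
  | [] => g
  | pc :: l => fun x y => if y pc.1 = pc.2 then checkList g g' l x y else g' x y

lemma bsub_checkList {F : Set TSF} {A : List TSF} {m n : ℕ} {g g' : TS m n}
    (hg : Bsub F A m n g) (hg' : Bsub F A m n g') :
    ∀ l, Bsub F A m n (checkList g g' l)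
  | [] => hg
  | pc :: l => bsub_ifeq pc.2 pc.1 (bsub_checkList hg hg' l) hg'

lemma checkList_pos {m n : ℕ} {g g' : TS m n} {x y} :
    ∀ {l}, (∀ pc ∈ l, y pc.1 = pc.2) → checkList g g' l x y = g x y
  | [], _ => rfl
  | pc :: l, h => by
    have h1 := h pc (List.mem_cons_self)
    show (if y pc.1 = pc.2 then checkList g g' l x y else g' x y) = g x y
    rw [if_pos h1]
    exact checkList_pos (fun pc' h' => h pc' (List.mem_cons_of_mem _ h'))

lemma checkList_neg {m n : ℕ} {g g' : TS m n} {x y} :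
    ∀ {l}, (∃ pc ∈ l, y pc.1 ≠ pc.2) → checkList g g' l x y = g' x y := by
  intro l
  induction l with
  | nil => rintro ⟨pc, h, -⟩; cases h
  | cons pc l ih =>
    rintro ⟨pc', hmem, hne⟩
    rcases List.mem_cons.mp hmem with rfl | hmem
    · show (if y pc'.1 = pc'.2 then checkList g g' l x y else g' x y) = g' x y
      rw [if_neg hne]
    · show (if y pc.1 = pc.2 then checkList g g' l x y else g' x y) = g' x y
      by_cases h : y pc.1 = pc.2
      · rw [if_pos h]; exact ih ⟨pc', hmem, hne⟩
      · rw [if_neg h]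

/-- dispatch chain over a list of indices -/
def chain {I : Type} {m n : ℕ} (G : I → TS m n) (test : I → List (Fin n × ℕ)) :
    List I → TS m n
  | [] => fun _ _ => 0
  | i :: l => checkList (G i) (chain G test l) (test i)

lemma bsub_chain {F : Set TSF} {A : List TSF} {I : Type} {m n : ℕ}
    (G : I → TS m n) (test : I → List (Fin n × ℕ)) (hG : ∀ i, Bsub F A m n (G i)) :
    ∀ l, Bsub F A m n (chain G test l)
  | [] => .zero
  | i :: l => bsub_checkList (hG i) (bsub_chain G test hG l) _

lemma chain_eval_mem {I : Type} {m n : ℕ} {G : I → TS m n} {test} {x y} {i : I}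
    (hpass : ∀ pc ∈ test i, y pc.1 = pc.2)
    (hfail : ∀ i', i' ≠ i → ∃ pc ∈ test i', y pc.1 ≠ pc.2) :
    ∀ {l}, i ∈ l → chain G test l x y = G i x y := by
  intro l
  induction l with
  | nil => intro h; cases h
  | cons i' l ih =>
    intro hmem
    by_cases h : i' = i
    · subst h; exact checkList_pos hpass
    · have h2 : chain G test (i' :: l) x y = chain G test l x y := checkList_neg (hfail i' h)
      rw [h2]
      refine ih ?_
      rcases List.mem_cons.mp hmem with rfl | h3
      · exact absurd rfl h
      · exact h3

lemma chain_eval_none {I : Type} {m n : ℕ} {G : I → TS m n} {test} {x y} :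
    ∀ {l}, (∀ i ∈ l, ∃ pc ∈ test i, y pc.1 ≠ pc.2) → chain G test l x y = 0 := by
  intro l
  induction l with
  | nil => intro _; rfl
  | cons i l ih =>
    intro h
    have h2 : chain G test (i :: l) x y = chain G test l x y :=
      checkList_neg (h i (List.mem_cons_self))
    rw [h2]
    exact ih (fun i' h' => h i' (List.mem_cons_of_mem _ h'))

end BsubLemmas

lemma pguard_congr {m n n' : ℕ} {x u : Fin m → ℕ} {y v : Fin n → ℕ} {y' v' : Fin n' → ℕ}
    {f : TS m n} {f' : TS m n'}
    (hiff : TupleSub v y ↔ TupleSub v' y') (hval : f u v = f' u v') :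
    pguard x y f u v = pguard x y' f' u v' := by
  simp only [pguard]
  exact @if_congr _ _ _ (Classical.propDecidable _) (Classical.propDecidable _) _ _ _ _
    (and_congr_right fun _ => hiff) hval rfl
/-- A simultaneous safe recursion scheme on the permutation-of-prefixes order `⊂`
reduces to the single recursion scheme: if `f₁,…,f_k` are defined simultaneously by
`fᵢ(x⃗;y⃗) = hᵢ((λu⃗ ⊂ x⃗, λv⃗ ⊆ y⃗. f_j(u⃗;v⃗))_j)(x⃗;y⃗)` from `hᵢ ∈ B^⊂(a⃗,b⃗)`,
then each `fᵢ ∈ B^⊂(b⃗)`. -/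
theorem simultaneous_srec_reduces (k m n : ℕ) (B : List TSF)
    (H : Fin k → (Fin k → TS m n) → TS m n) (f : Fin k → TS m n)
    (hH : ∀ (i : Fin k) (a : Fin k → TS m n),
      Bsub ∅ ((List.ofFn fun j => TSF.mk m n (a j)) ++ B) m n (H i a))
    (hf : ∀ i x y, f i x y = H i (fun j => pguard x y (f j)) x y) :
    ∀ i, Bsub ∅ B m n (f i) := by
  classical
  cases k with
  | zero => exact fun i => i.elim0
  | succ K =>
  intro i0
  -- the index codes: rotations of (1, …, K+1)
  let base : Fin (K+1) → ℕ := fun t => (t : ℕ) + 1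
  let code : Fin (K+1) → Fin (K+1) → ℕ := fun i => base ∘ (Equiv.addRight i)
  have code_apply : ∀ i t, code i t = ((t + i : Fin (K+1)) : ℕ) + 1 := fun i t => rfl
  have code_inj : ∀ {i i' : Fin (K+1)}, code i = code i' → i = i' := by
    intro i i' h
    have h0 := congrFun h 0
    rw [code_apply, code_apply, zero_add, zero_add] at h0
    exact Fin.ext (by omega)
  have hms : ∀ i i' : Fin (K+1), msOf (code i) = msOf (code i') := by
    intro i i'
    show msOf (base ∘ (Equiv.addRight i)) = msOf (base ∘ (Equiv.addRight i'))
    rw [msOf_comp_perm, msOf_comp_perm]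
  have hsub : ∀ i j : Fin (K+1), TupleSub (code j) (code i) := by
    intro i j
    refine ⟨Equiv.addRight (j - i), fun t => ?_⟩
    have he : code i ((Equiv.addRight (j - i)) t) = code j t := by
      rw [code_apply, code_apply]
      congr 2
      show t + (j - i) + i = t + j
      rw [add_assoc, sub_add_cancel]
    rw [he]
    exact binPrefix_refl _
  -- parts of the extended safe arguments
  let zpart : (Fin (n + (K+1)) → ℕ) → Fin (K+1) → ℕ := fun Y t => Y (Fin.natAdd n t)
  let ypart : (Fin (n + (K+1)) → ℕ) → Fin n → ℕ := fun Y ℓ => Y (Fin.castAdd (K+1) ℓ)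
  -- the single function simulating all the fᵢ
  let Fbig : TS m (n + (K+1)) := fun x Y =>
    if h : ∃ i, zpart Y = code i then f h.choose x (ypart Y) else 0
  have happz : ∀ (y' : Fin n → ℕ) (c : Fin (K+1) → ℕ), zpart (Fin.append y' c) = c := by
    intro y' c; funext t; exact Fin.append_right _ _ t
  have happy : ∀ (y' : Fin n → ℕ) (c : Fin (K+1) → ℕ), ypart (Fin.append y' c) = y' := by
    intro y' c; funext ℓ; exact Fin.append_left _ _ ℓ
  have hYsplit : ∀ Y, Fin.append (ypart Y) (zpart Y) = Y := by
    intro Y; funext w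
    refine Fin.addCases (fun ℓ => ?_) (fun t => ?_) w
    · exact Fin.append_left _ _ ℓ
    · exact Fin.append_right _ _ t
  have hFeval : ∀ (j : Fin (K+1)) x y', Fbig x (Fin.append y' (code j)) = f j x y' := by
    intro j x y'
    have hex : ∃ i, zpart (Fin.append y' (code j)) = code i := ⟨j, happz y' _⟩
    have hch : hex.choose = j := code_inj (hex.choose_spec.symm.trans (happz y' _))
    show (if h : ∃ i, zpart (Fin.append y' (code j)) = code i
        then f h.choose x (ypart (Fin.append y' (code j))) else 0) = f j x y'
    rw [dif_pos hex, hch, happy]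
  -- the step functional for the single recursion
  let aj : TS m (n + (K+1)) → Fin (K+1) → TS m n :=
    fun a j => fun u v => a u (Fin.append v (code j))
  let H' : TS m (n + (K+1)) → TS m (n + (K+1)) := fun a x Y =>
    if h : ∃ i, zpart Y = code i then H h.choose (aj a) x (ypart Y) else 0
  -- the guard equivalence
  have hguard : ∀ (x : Fin m → ℕ) (y' : Fin n → ℕ) (i j : Fin (K+1)),
      (fun u v => pguard x (Fin.append y' (code i)) Fbig u (Fin.append v (code j)))
        = pguard x y' (f j) := by
    intro x y' i j
    funext u v
    refine pguard_congr ⟨?_, ?_⟩ (hFeval j u v)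
    · exact fun h => tupleSub_cancel (hms j i) h
    · exact fun h => tupleSub_append h (hsub i j)
  -- the fixed-point equation
  have hfix : ∀ x Y, Fbig x Y = H' (pguard x Y Fbig) x Y := by
    intro x Y
    by_cases hex : ∃ i, zpart Y = code i
    · have hz : zpart Y = code hex.choose := hex.choose_spec
      have hY : Y = Fin.append (ypart Y) (code hex.choose) := by
        conv_lhs => rw [← hYsplit Y, hz]
      have hL : Fbig x Y = f hex.choose x (ypart Y) := by
        conv_lhs => rw [hY]
        rw [hFeval]
      have hR : H' (pguard x Y Fbig) x Y
          = H hex.choose (aj (pguard x Y Fbig)) x (ypart Y) := by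
        show (if h : ∃ i, zpart Y = code i
            then H h.choose (aj (pguard x Y Fbig)) x (ypart Y) else 0) = _
        rw [dif_pos hex]
      have hajeq : aj (pguard x Y Fbig) = fun j => pguard x (ypart Y) (f j) := by
        funext j
        show (fun u v => pguard x Y Fbig u (Fin.append v (code j))) = pguard x (ypart Y) (f j)
        conv_lhs => rw [hY]
        exact hguard x (ypart Y) hex.choose j
      rw [hL, hR, hajeq]
      exact hf hex.choose x (ypart Y)
    · have hL : Fbig x Y = 0 := by
        show (if h : ∃ i, zpart Y = code i then f h.choose x (ypart Y) else 0) = 0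
        rw [dif_neg hex]
      have hR : H' (pguard x Y Fbig) x Y = 0 := by
        show (if h : ∃ i, zpart Y = code i
            then H h.choose (aj (pguard x Y Fbig)) x (ypart Y) else 0) = 0
        rw [dif_neg hex]
      rw [hL, hR]
  -- Fbig is definable by a single safe recursion
  have hFbigB : Bsub ∅ B m (n + (K+1)) Fbig := by
    refine Bsub.srec H' Fbig (fun a => ?_) hfix
    have ha : Bsub ∅ (⟨m, n + (K+1), a⟩ :: B) m (n + (K+1)) a :=
      Bsub.oracle ⟨m, n + (K+1), a⟩ (List.mem_cons_self)
    have hajB : ∀ j, Bsub ∅ (⟨m, n + (K+1), a⟩ :: B) m n (aj a j) := by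
      intro j
      refine Bsub.congr (Bsub.comp a (fun p => fun x _ => x p)
        (Fin.append (fun ℓ : Fin n => (fun _ v => v ℓ : TS m n))
          (fun t : Fin (K+1) => (fun _ _ => code j t : TS m n)))
        ha (fun p => .projN p) (fun w => ?_)) (fun u v => ?_)
      · refine Fin.addCases (fun ℓ => ?_) (fun t => ?_) w
        · exact (congrArg (Bsub ∅ _ m n) (Fin.append_left (α := TS m n) _ _ ℓ)).mpr (.projS ℓ)
        · exact (congrArg (Bsub ∅ _ m n) (Fin.append_right (α := TS m n) _ _ t)).mpr (bsub_const _ m n _)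
      · show a u (Fin.append v (code j)) = a (fun p => u p)
          (fun w => Fin.append (fun ℓ : Fin n => (fun _ v => v ℓ : TS m n))
            (fun t : Fin (K+1) => (fun _ _ => code j t : TS m n)) w u v)
        have harg2 : (fun w => Fin.append (fun ℓ : Fin n => (fun _ v => v ℓ : TS m n))
            (fun t : Fin (K+1) => (fun _ _ => code j t : TS m n)) w u v)
            = Fin.append v (code j) := by
          funext w
          refine Fin.addCases (fun ℓ => ?_) (fun t => ?_) w
          · rw [Fin.append_left, Fin.append_left]
          · rw [Fin.append_right, Fin.append_right]
        rw [harg2]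
    have hHh : ∀ i : Fin (K+1), Bsub ∅ (⟨m, n + (K+1), a⟩ :: B) m n (H i (aj a)) := by
      intro i
      refine (hH i (aj a)).subst _ ?_
      intro o ho
      rcases List.mem_append.mp ho with ho | ho
      · obtain ⟨j, rfl⟩ := List.mem_ofFn.mp ho
        exact hajB j
      · exact .oracle o (List.mem_cons_of_mem _ ho)
    have hG : ∀ i : Fin (K+1),
        Bsub ∅ (⟨m, n + (K+1), a⟩ :: B) m (n + (K+1))
          (fun x Y => H i (aj a) x (ypart Y)) := by
      intro i
      exact Bsub.congr (Bsub.comp (H i (aj a)) (fun p => fun x _ => x p)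
        (fun ℓ : Fin n => fun _ Y => Y (Fin.castAdd (K+1) ℓ))
        (hHh i) (fun p => .projN p) (fun ℓ => .projS _)) (fun x Y => rfl)
    let test : Fin (K+1) → List (Fin (n + (K+1)) × ℕ) :=
      fun i => List.ofFn (fun t : Fin (K+1) => (Fin.natAdd n t, code i t))
    have hchain := bsub_chain (fun i : Fin (K+1) => fun x Y => H i (aj a) x (ypart Y))
      test hG (List.finRange (K+1))
    refine Bsub.congr hchain (fun x Y => ?_)
    by_cases hex : ∃ i, zpart Y = code i
    · have hz : zpart Y = code hex.choose := hex.choose_spec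
      have hpass : ∀ pc ∈ test hex.choose, Y pc.1 = pc.2 := by
        intro pc hpc
        obtain ⟨t, rfl⟩ := List.mem_ofFn.mp hpc
        exact congrFun hz t
      have hfail : ∀ i', i' ≠ hex.choose → ∃ pc ∈ test i', Y pc.1 ≠ pc.2 := by
        intro i' hne
        by_contra hcon
        push_neg at hcon
        refine hne (code_inj ?_)
        have h3 : zpart Y = code i' := by
          funext t
          exact hcon (Fin.natAdd n t, code i' t) (List.mem_ofFn.mpr ⟨t, rfl⟩)
        exact h3.symm.trans hz
      have hL : H' a x Y = H hex.choose (aj a) x (ypart Y) := by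
        show (if h : ∃ i, zpart Y = code i then H h.choose (aj a) x (ypart Y) else 0) = _
        rw [dif_pos hex]
      rw [hL]; exact (chain_eval_mem (G := fun i : Fin (K+1) => fun x Y => H i (aj a) x (ypart Y))
        (x := x) hpass hfail (List.mem_finRange _)).symm
    · have hL : H' a x Y = 0 := by
        show (if h : ∃ i, zpart Y = code i then H h.choose (aj a) x (ypart Y) else 0) = 0
        rw [dif_neg hex]
      rw [hL]; refine (chain_eval_none ?_).symm
      intro i' _
      by_contra hcon
      push_neg at hcon
      refine hex ⟨i', ?_⟩
      funext t
      exact hcon (Fin.natAdd n t, code i' t) (List.mem_ofFn.mpr ⟨t, rfl⟩)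
  -- finally, f i0 is a safe composition of Fbig with projections and constants
  refine Bsub.congr (Bsub.comp Fbig (fun p => fun x _ => x p)
    (Fin.append (fun ℓ : Fin n => (fun _ y => y ℓ : TS m n))
      (fun t : Fin (K+1) => (fun _ _ => code i0 t : TS m n)))
    hFbigB (fun p => .projN p) (fun w => ?_)) (fun x y => ?_)
  · refine Fin.addCases (fun ℓ => ?_) (fun t => ?_) w
    · exact (congrArg (Bsub ∅ _ m n) (Fin.append_left (α := TS m n) _ _ ℓ)).mpr (.projS ℓ)
    · exact (congrArg (Bsub ∅ _ m n) (Fin.append_right (α := TS m n) _ _ t)).mpr (bsub_const B m n _)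
  · show f i0 x y = Fbig (fun p => x p)
      (fun w => Fin.append (fun ℓ : Fin n => (fun _ y => y ℓ : TS m n))
        (fun t : Fin (K+1) => (fun _ _ => code i0 t : TS m n)) w x y)
    have harg : (fun w => Fin.append (fun ℓ : Fin n => (fun _ y => y ℓ : TS m n))
        (fun t : Fin (K+1) => (fun _ _ => code i0 t : TS m n)) w x y)
        = Fin.append y (code i0) := by
      funext w
      refine Fin.addCases (fun ℓ => ?_) (fun t => ?_) w
      · rw [Fin.append_left, Fin.append_left]
      · rw [Fin.append_right, Fin.append_right]
    rw [harg]
    exact (hFeval i0 x y).symm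
end
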